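/- arXiv:math/0607809 — 6 statements merged into one kernel-verified Lean document; each statement's English description precedes it below -/
import Mathlib

section
/- Let λ₁, …, λ_N be distinct real numbers and P₁, …, P_N orthogonal projections on ℂ^m. The block Hankel matrix (T_{s+k})_{s,k=0}^{p-1} with T_s = Σ_j λ_jˢ P_j is invertible (equivalently, positive definite) if and only if there is no nonzero ℂ^m-valued polynomial F of degree at most p-1 with P_j F(λ_j) = 0 for all j = 1, …, N. -/
open Matrix
open scoped ComplexOrder

/-!
Let `A` be the block Vandermonde matrix with block rows `(λ_j^s P_j)_{s<p}`, indexed by `j`.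
Since `P_jᴴ P_j = P_j`, the Hankel matrix is the Gram matrix `Aᴴ A`, hence it is invertible iff
`A` is injective. Applied to the coefficient vector `(v_s)` of `F`, `A` returns `(P_j F(λ_j))_j`.
-/

theorem Matrix.isUnit_conjTranspose_mul_self_iff {m n R : Type*} [Fintype m] [Fintype n]
    [DecidableEq n] [Field R] [PartialOrder R] [StarRing R] [StarOrderedRing R]
    (A : Matrix m n R) : IsUnit (Aᴴ * A) ↔ ∀ u, A *ᵥ u = 0 → u = 0 := by
  rw [isUnit_iff_isUnit_det, isUnit_iff_ne_zero, Ne, ← exists_mulVec_eq_zero_iff]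
  simp only [conjTranspose_mul_self_mulVec_eq_zero]
  push Not
  exact forall_congr' fun _ => not_imp_not

namespace BlockHankel

variable {ι n : Type*} [Fintype n] (p : ℕ) (lam : ι → ℝ) (P : ι → Matrix n n ℂ)

def blockVandermonde : Matrix (ι × n) (Fin p × n) ℂ :=
  of fun ja sx => (lam ja.1 : ℂ) ^ (sx.1 : ℕ) * P ja.1 ja.2 sx.2

theorem blockVandermonde_mulVec_apply (u : Fin p × n → ℂ) (j : ι) (a : n) :
    (blockVandermonde p lam P *ᵥ u) (j, a) =
      (P j *ᵥ ∑ s : Fin p, (lam j : ℂ) ^ (s : ℕ) • Function.curry u s) a := by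
  simp only [mulVec, dotProduct, blockVandermonde, of_apply, Fintype.sum_prod_type,
    Finset.sum_apply, Pi.smul_apply, Function.curry_apply, smul_eq_mul, Finset.mul_sum]
  rw [Finset.sum_comm]
  exact Finset.sum_congr rfl fun _ _ => Finset.sum_congr rfl fun _ _ => by ring

theorem blockVandermonde_mulVec_eq_zero_iff (u : Fin p × n → ℂ) :
    blockVandermonde p lam P *ᵥ u = 0 ↔
      ∀ j, P j *ᵥ ∑ s : Fin p, (lam j : ℂ) ^ (s : ℕ) • Function.curry u s = 0 := by
  simp only [funext_iff, Prod.forall, blockVandermonde_mulVec_apply, Pi.zero_apply]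

theorem conjTranspose_blockVandermonde_mul_self [Fintype ι] (hP : ∀ j, (P j)ᴴ * P j = P j) :
    (blockVandermonde p lam P)ᴴ * blockVandermonde p lam P =
      of fun x y : Fin p × n => (∑ j, (lam j : ℂ) ^ ((x.1 : ℕ) + (y.1 : ℕ)) • P j) x.2 y.2 := by
  ext ⟨s, x⟩ ⟨k, y⟩
  have hlam_star : ∀ j (e : ℕ), star ((lam j : ℂ) ^ e) = (lam j : ℂ) ^ e := fun j e => by
    rw [← Complex.ofReal_pow, Complex.star_def, Complex.conj_ofReal]
  simp only [mul_apply, conjTranspose_apply, blockVandermonde, of_apply, Fintype.sum_prod_type,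
    Matrix.sum_apply, Matrix.smul_apply, smul_eq_mul]
  refine Finset.sum_congr rfl fun j _ => ?_
  conv_rhs => rw [← hP j, mul_apply, Finset.mul_sum]
  refine Finset.sum_congr rfl fun a _ => ?_
  rw [star_mul', hlam_star, conjTranspose_apply, pow_add]
  ring

end BlockHankel

open BlockHankel in
theorem hankel_invertible_iff_tame_general (m N p : ℕ) (lam : Fin N → ℝ)
    (P : Fin N → Matrix (Fin m) (Fin m) ℂ)
    (hPherm : ∀ j, (P j)ᴴ = P j) (hPidem : ∀ j, P j * P j = P j) :
    IsUnit (Matrix.of fun x y : Fin p × Fin m =>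
        (∑ j : Fin N, ((lam j : ℂ) ^ ((x.1 : ℕ) + (y.1 : ℕ))) • P j) x.2 y.2) ↔
      ¬ ∃ v : Fin p → Fin m → ℂ, v ≠ 0 ∧
          ∀ j, P j *ᵥ (∑ s : Fin p, ((lam j : ℂ) ^ (s : ℕ)) • v s) = 0 := by
  have hP : ∀ j, (P j)ᴴ * P j = P j := fun j => by rw [hPherm, hPidem]
  rw [← conjTranspose_blockVandermonde_mul_self p lam P hP, isUnit_conjTranspose_mul_self_iff,
    (Equiv.curry _ _ _).forall_congr_left]
  have huncurry (v : Fin p → Fin m → ℂ) : Function.uncurry v = 0 ↔ v = 0 :=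
    Function.uncurry_injective.eq_iff' rfl
  simp only [blockVandermonde_mulVec_eq_zero_iff, Equiv.curry_symm_apply, Function.curry_uncurry,
    huncurry, not_exists, not_and', ne_eq, not_not]

/-- The block Hankel matrix `(T_{s+k})_{s,k=0}^{p-1}`, `T_s = ∑ j (λ j)^s • P j`, is
invertible if and only if there is no nonzero `ℂ^m`-valued polynomial `F` of degree
at most `p-1` with `P j F(λ j) = 0` for all `j`. -/
theorem hankel_invertible_iff_tame (m N p : ℕ) (lam : Fin N → ℝ)
    (hlam : Function.Injective lam)
    (P : Fin N → Matrix (Fin m) (Fin m) ℂ)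
    (hPherm : ∀ j, (P j)ᴴ = P j) (hPidem : ∀ j, P j * P j = P j) :
    IsUnit (Matrix.of fun x y : Fin p × Fin m =>
        (∑ j : Fin N, ((lam j : ℂ) ^ ((x.1 : ℕ) + (y.1 : ℕ))) • P j) x.2 y.2) ↔
      ¬ ∃ v : Fin p → Fin m → ℂ, v ≠ 0 ∧
          ∀ j, P j *ᵥ (∑ s : Fin p, ((lam j : ℂ) ^ (s : ℕ)) • v s) = 0 :=
  hankel_invertible_iff_tame_general m N p lam P hPherm hPidem
end

section
/- Let λ be an eigenvalue of the recursion, E = Ker φ_{p+1}(λ) and E♯ = Ker φ_{p+1}(λ̄ = λ)ᴴ, with orthogonal projections P and P♯. Then φ_p(λ) maps E into E♯, i.e., P♯ φ_p(λ) P = φ_p(λ) P. -/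
open Matrix

/-!
Eliminating `aₙ₊₁ φₙ₊₂` through the recursion shows inductively that the Wronskian-type
products `φₙ(λ)ᴴ aₙ φₙ₊₁(λ)` are Hermitian when `λ` is real and the `bₙ` are Hermitian.
At `n = p`, where `a_p = 1`, this gives `φ_pᴴ φ_{p+1} = φ_{p+1}ᴴ φ_p`, so `φ_{p+1} v = 0`
implies `φ_{p+1}ᴴ (φ_p v) = φ_pᴴ (φ_{p+1} v) = 0`.
-/

theorem isSelfAdjoint_star_mul_mul_succ {R A : Type*} [CommSemiring R] [StarRing R] [Ring A]
    [StarRing A] [Algebra R A] [StarModule R A] (a b φ : ℕ → A) (z : R) (hz : IsSelfAdjoint z)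
    (N : ℕ) (hφ0 : φ 0 = 0) (hb : ∀ n, 1 ≤ n → n ≤ N → IsSelfAdjoint (b n))
    (hrec : ∀ n, 1 ≤ n → n ≤ N →
      a n * φ (n + 1) + b n * φ n + star (a (n - 1)) * φ (n - 1) = z • φ n) :
    ∀ n ≤ N, IsSelfAdjoint (star (φ n) * (a n * φ (n + 1))) := by
  intro n hn
  induction n with
  | zero => simp [hφ0]
  | succ k ih =>
    have hstep : a (k + 1) * φ (k + 1 + 1) =
        z • φ (k + 1) - b (k + 1) * φ (k + 1) - star (a k) * φ k := by
      have h := hrec (k + 1) k.succ_pos hn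
      rw [Nat.add_sub_cancel] at h
      rw [← h]
      abel
    have hexpand : star (φ (k + 1)) * (a (k + 1) * φ (k + 1 + 1)) =
        z • (star (φ (k + 1)) * φ (k + 1)) - star (φ (k + 1)) * b (k + 1) * φ (k + 1) -
          star (star (φ k) * (a k * φ (k + 1))) := by
      rw [hstep]
      simp only [mul_sub, mul_smul_comm, star_mul, star_star, mul_assoc]
    rw [hexpand]
    exact ((hz.smul (IsSelfAdjoint.star_mul_self _)).sub
      ((hb (k + 1) k.succ_pos hn).conjugate' _)).sub (IsSelfAdjoint.star_iff.2 (ih (by omega)))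

theorem conjTranspose_mulVec_mulVec_eq_zero {ι R : Type*} [Fintype ι] [CommSemiring R]
    [StarRing R] {A B : Matrix ι ι R} (h : Aᴴ * B = Bᴴ * A) {v : ι → R} (hv : B *ᵥ v = 0) :
    Bᴴ *ᵥ (A *ᵥ v) = 0 := by
  rw [mulVec_mulVec, ← h, ← mulVec_mulVec, hv, mulVec_zero]

theorem phi_p_maps_E_to_Esharp_general (m p : ℕ)
    (a b : ℕ → Matrix (Fin m) (Fin m) ℂ)
    (hap : a p = 1)
    (hb : ∀ n, 1 ≤ n → n ≤ p → (b n).IsHermitian)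
    (φ : ℕ → ℂ → Matrix (Fin m) (Fin m) ℂ)
    (hφ0 : ∀ z, φ 0 z = 0)
    (hφ : ∀ (z : ℂ) (n : ℕ), 1 ≤ n → n ≤ p →
      a n * φ (n + 1) z + b n * φ n z + (a (n - 1))ᴴ * φ (n - 1) z = z • φ n z)
    (lam : ℝ)
    (P Ps : Matrix (Fin m) (Fin m) ℂ)
    (hPidem : P * P = P)
    (hPker : ∀ h : Fin m → ℂ, φ (p + 1) (lam : ℂ) *ᵥ h = 0 ↔ P *ᵥ h = h)
    (hPsker : ∀ h : Fin m → ℂ, (φ (p + 1) (lam : ℂ))ᴴ *ᵥ h = 0 ↔ Ps *ᵥ h = h) :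
    Ps * (φ p (lam : ℂ) * P) = φ p (lam : ℂ) * P := by
  have hsymm : (φ p lam)ᴴ * φ (p + 1) lam = (φ (p + 1) lam)ᴴ * φ p lam := by
    have h := isSelfAdjoint_star_mul_mul_succ a b (φ · lam) (lam : ℂ) (Complex.conj_ofReal lam)
      p (hφ0 lam) hb (hφ lam) p le_rfl
    simpa only [hap, one_mul, star_eq_conjTranspose, conjTranspose_mul,
      conjTranspose_conjTranspose] using h.symm
  refine ext_iff_mulVec.2 fun v => ?_
  have hPv : φ (p + 1) lam *ᵥ (P *ᵥ v) = 0 := (hPker _).2 (by rw [mulVec_mulVec, hPidem])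
  simpa only [← mulVec_mulVec] using
    (hPsker _).1 (conjTranspose_mulVec_mulVec_eq_zero hsymm hPv)

/-- For a real root `λ` of `det φ_{p+1}`, with `P`, `P♯` the orthogonal projections
onto `E = Ker φ_{p+1}(λ)` and `E♯ = Ker φ_{p+1}(λ)ᴴ`, the matrix `φ_p(λ)` maps `E`
into `E♯`: `P♯ φ_p(λ) P = φ_p(λ) P`. -/
theorem phi_p_maps_E_to_Esharp (m p : ℕ)
    (a b : ℕ → Matrix (Fin m) (Fin m) ℂ)
    (ha0 : a 0 = 1) (hap : a p = 1)
    (hb : ∀ n, 1 ≤ n → n ≤ p → (b n).IsHermitian)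
    (haInv : ∀ n, 1 ≤ n → n ≤ p - 1 → IsUnit (a n))
    (φ : ℕ → ℂ → Matrix (Fin m) (Fin m) ℂ)
    (hφ0 : ∀ z, φ 0 z = 0) (hφ1 : ∀ z, φ 1 z = 1)
    (hφ : ∀ (z : ℂ) (n : ℕ), 1 ≤ n → n ≤ p →
      a n * φ (n + 1) z + b n * φ n z + (a (n - 1))ᴴ * φ (n - 1) z = z • φ n z)
    (lam : ℝ) (hroot : (φ (p + 1) (lam : ℂ)).det = 0)
    (P Ps : Matrix (Fin m) (Fin m) ℂ)
    (hPherm : Pᴴ = P) (hPidem : P * P = P)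
    (hPker : ∀ h : Fin m → ℂ, φ (p + 1) (lam : ℂ) *ᵥ h = 0 ↔ P *ᵥ h = h)
    (hPsherm : Psᴴ = Ps) (hPsidem : Ps * Ps = Ps)
    (hPsker : ∀ h : Fin m → ℂ, (φ (p + 1) (lam : ℂ))ᴴ *ᵥ h = 0 ↔ Ps *ᵥ h = h) :
    Ps * (φ p (lam : ℂ) * P) = φ p (lam : ℂ) * P :=
  phi_p_maps_E_to_Esharp_general m p a b hap hb φ hφ0 hφ lam P Ps hPidem hPker hPsker
end

section
/- Let χ = (χ_n)_{n=0}^{p+1} be the solution of the Jacobi recursion with χ_{p+1} = 0, χ_p = I, and φ the fundamental solution with φ₀ = 0, φ₁ = I. Then χ₀(z̄)ᴴ = φ_{p+1}(z) for all z ∈ ℂ. -/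
open Matrix

/-! The Wronskian `W_k = ψ_kᴴ a_k φ_{k+1} - ψ_{k+1}ᴴ a_kᴴ φ_k` of a solution `φ` at `z` and a
solution `ψ` at `z̄` is independent of `k`: substituting the recursion for `a_k φ_{k+1}` and
its adjoint for `ψ_{k+1}ᴴ a_kᴴ`, the `z`- and `b_k`-terms cancel because `b_k` is Hermitian.
With `χ` for `ψ`, the boundary values give `W_0 = χ_0(z̄)ᴴ` and `W_p = φ_{p+1}(z)`. -/

namespace Jacobi

variable {ι 𝕜 : Type*} [Fintype ι] [CommRing 𝕜] [StarRing 𝕜]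

def IsSolution (a b : ℕ → Matrix ι ι 𝕜) (N : ℕ) (z : 𝕜) (y : ℕ → Matrix ι ι 𝕜) : Prop :=
  ∀ n, 1 ≤ n → n ≤ N → a n * y (n + 1) + b n * y n + (a (n - 1))ᴴ * y (n - 1) = z • y n

def wronskian (a : ℕ → Matrix ι ι 𝕜) (ψ φ : ℕ → Matrix ι ι 𝕜) (k : ℕ) : Matrix ι ι 𝕜 :=
  (ψ k)ᴴ * a k * φ (k + 1) - (ψ (k + 1))ᴴ * (a k)ᴴ * φ k

variable {a b : ℕ → Matrix ι ι 𝕜} {N : ℕ} {z : 𝕜} {φ ψ : ℕ → Matrix ι ι 𝕜} {k : ℕ}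

theorem IsSolution.step (h : IsSolution a b N z φ) (hk : k + 1 ≤ N) :
    a (k + 1) * φ (k + 2) = z • φ (k + 1) - b (k + 1) * φ (k + 1) - (a k)ᴴ * φ k := by
  have e := h (k + 1) le_add_self hk
  simp only [Nat.add_sub_cancel] at e
  rw [← e]
  abel

theorem IsSolution.step_conjTranspose (h : IsSolution a b N (star z) ψ)
    (hb : (b (k + 1)).IsHermitian) (hk : k + 1 ≤ N) :
    (ψ (k + 2))ᴴ * (a (k + 1))ᴴ
      = z • (ψ (k + 1))ᴴ - (ψ (k + 1))ᴴ * b (k + 1) - (ψ k)ᴴ * a k := by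
  have e := congrArg conjTranspose (h.step hk)
  rwa [conjTranspose_mul, conjTranspose_sub, conjTranspose_sub, conjTranspose_smul,
    conjTranspose_mul, conjTranspose_mul, conjTranspose_conjTranspose, hb.eq, star_star] at e

theorem wronskian_succ (hφ : IsSolution a b N z φ) (hψ : IsSolution a b N (star z) ψ)
    (hb : (b (k + 1)).IsHermitian) (hk : k + 1 ≤ N) :
    wronskian a ψ φ (k + 1) = wronskian a ψ φ k := by
  rw [wronskian, wronskian, mul_assoc, hφ.step hk, hψ.step_conjTranspose hb hk]
  simp only [mul_sub, sub_mul, mul_smul_comm, smul_mul_assoc, mul_assoc]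
  abel

theorem wronskian_eq_wronskian_zero (hφ : IsSolution a b N z φ)
    (hψ : IsSolution a b N (star z) ψ) (hb : ∀ n, 1 ≤ n → n ≤ N → (b n).IsHermitian) :
    ∀ k ≤ N, wronskian a ψ φ k = wronskian a ψ φ 0
  | 0, _ => rfl
  | k + 1, hk => by
    rw [wronskian_succ hφ hψ (hb (k + 1) le_add_self hk) hk,
      wronskian_eq_wronskian_zero hφ hψ hb k (by omega)]

end Jacobi

open Jacobi in
theorem chi_zero_eq_phi_general (m p : ℕ)
    (a b : ℕ → Matrix (Fin m) (Fin m) ℂ)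
    (ha0 : a 0 = 1) (hap : a p = 1)
    (hb : ∀ n, 1 ≤ n → n ≤ p → (b n).IsHermitian)
    (φ χ : ℕ → ℂ → Matrix (Fin m) (Fin m) ℂ)
    (hφ0 : ∀ z, φ 0 z = 0) (hφ1 : ∀ z, φ 1 z = 1)
    (hφ : ∀ (z : ℂ) (n : ℕ), 1 ≤ n → n ≤ p →
      a n * φ (n + 1) z + b n * φ n z + (a (n - 1))ᴴ * φ (n - 1) z = z • φ n z)
    (hχp1 : ∀ z, χ (p + 1) z = 0) (hχp : ∀ z, χ p z = 1)
    (hχ : ∀ (z : ℂ) (n : ℕ), 1 ≤ n → n ≤ p →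
      a n * χ (n + 1) z + b n * χ n z + (a (n - 1))ᴴ * χ (n - 1) z = z • χ n z) :
    ∀ z : ℂ, (χ 0 ((starRingEnd ℂ) z))ᴴ = φ (p + 1) z := by
  intro z
  have hφz : IsSolution a b p z (φ · z) := hφ z
  have hχz : IsSolution a b p (star z) (χ · (star z)) := hχ (star z)
  have hW := wronskian_eq_wronskian_zero hφz hχz hb p le_rfl
  simpa [wronskian, ha0, hap, hφ0, hφ1, hχp1, hχp] using hW.symm

/-- For the solution `χ` of the Jacobi recursion with `χ_{p+1} = 0`, `χ_p = I`, and
the fundamental solution `φ` (with `φ₀ = 0`, `φ₁ = I`), one has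
`χ₀(z̄)ᴴ = φ_{p+1}(z)` for all `z ∈ ℂ`. -/
theorem chi_zero_eq_phi (m p : ℕ) (hp : 1 ≤ p)
    (a b : ℕ → Matrix (Fin m) (Fin m) ℂ)
    (ha0 : a 0 = 1) (hap : a p = 1)
    (hb : ∀ n, 1 ≤ n → n ≤ p → (b n).IsHermitian)
    (haInv : ∀ n, 1 ≤ n → n ≤ p - 1 → IsUnit (a n))
    (φ χ : ℕ → ℂ → Matrix (Fin m) (Fin m) ℂ)
    (hφ0 : ∀ z, φ 0 z = 0) (hφ1 : ∀ z, φ 1 z = 1)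
    (hφ : ∀ (z : ℂ) (n : ℕ), 1 ≤ n → n ≤ p →
      a n * φ (n + 1) z + b n * φ n z + (a (n - 1))ᴴ * φ (n - 1) z = z • φ n z)
    (hχp1 : ∀ z, χ (p + 1) z = 0) (hχp : ∀ z, χ p z = 1)
    (hχ : ∀ (z : ℂ) (n : ℕ), 1 ≤ n → n ≤ p →
      a n * χ (n + 1) z + b n * χ n z + (a (n - 1))ᴴ * χ (n - 1) z = z • χ n z) :
    ∀ z : ℂ, (χ 0 ((starRingEnd ℂ) z))ᴴ = φ (p + 1) z :=
  chi_zero_eq_phi_general m p a b ha0 hap hb φ χ hφ0 hφ1 hφ hχp1 hχp hχ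
end

section
/- Let λ be an eigenvalue, P, P♯ the orthogonal projections onto E = Ker φ_{p+1}(λ) and E♯ = Ker φ_{p+1}(λ)ᴴ. Then the operator Y = P♯ φ̇_{p+1}(λ) P restricted to a map E → E♯ is invertible. -/
open Matrix

section
open ComplexOrder
private lemma rank_conjTranspose_complex {k : ℕ} (A : Matrix (Fin k) (Fin k) ℂ) :
    Aᴴ.rank = A.rank := Matrix.rank_conjTranspose A
end

/-- For a real root `λ` of `det φ_{p+1}` with orthogonal projections `P` onto
`E = Ker φ_{p+1}(λ)` and `P♯` onto `E♯ = Ker φ_{p+1}(λ)ᴴ`, the operator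
`Y = P♯ φ̇_{p+1}(λ) P : E → E♯` is invertible (injective and onto `E♯`). -/
theorem Y_invertible (m p : ℕ)
    (a b : ℕ → Matrix (Fin m) (Fin m) ℂ)
    (ha0 : a 0 = 1) (hap : a p = 1)
    (hb : ∀ n, 1 ≤ n → n ≤ p → (b n).IsHermitian)
    (haInv : ∀ n, n ≤ p → IsUnit (a n))
    (φ Dφ : ℕ → ℂ → Matrix (Fin m) (Fin m) ℂ)
    (hφ0 : ∀ z, φ 0 z = 0) (hφ1 : ∀ z, φ 1 z = 1)
    (hφ : ∀ (z : ℂ) (n : ℕ), 1 ≤ n → n ≤ p →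
      a n * φ (n + 1) z + b n * φ n z + (a (n - 1))ᴴ * φ (n - 1) z = z • φ n z)
    (hder : ∀ (n : ℕ) (z : ℂ) (i j : Fin m),
      HasDerivAt (fun w => φ n w i j) (Dφ n z i j) z)
    (lam : ℝ) (hroot : (φ (p + 1) (lam : ℂ)).det = 0)
    (P Ps : Matrix (Fin m) (Fin m) ℂ)
    (hPherm : Pᴴ = P) (hPidem : P * P = P)
    (hPker : ∀ h : Fin m → ℂ, φ (p + 1) (lam : ℂ) *ᵥ h = 0 ↔ P *ᵥ h = h)
    (hPsherm : Psᴴ = Ps) (hPsidem : Ps * Ps = Ps)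
    (hPsker : ∀ h : Fin m → ℂ, (φ (p + 1) (lam : ℂ))ᴴ *ᵥ h = 0 ↔ Ps *ᵥ h = h) :
    (∀ h : Fin m → ℂ, P *ᵥ h = h →
        (Ps * Dφ (p + 1) (lam : ℂ) * P) *ᵥ h = 0 → h = 0) ∧
    (∀ y : Fin m → ℂ, Ps *ᵥ y = y →
        ∃ h : Fin m → ℂ, P *ᵥ h = h ∧ (Ps * Dφ (p + 1) (lam : ℂ) * P) *ᵥ h = y) := by
  set z : ℂ := (lam : ℂ) with hz
  -- p ≥ 1
  have hp : 1 ≤ p := by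
    by_contra hcon
    interval_cases p
    rw [hφ1] at hroot
    simp at hroot
  -- derivative facts
  have hDφ0 : ∀ w : ℂ, Dφ 0 w = 0 := by
    intro w; ext i j
    have h1 : HasDerivAt (fun w' : ℂ => φ 0 w' i j) 0 w :=
      (hasDerivAt_const w ((0 : Matrix (Fin m) (Fin m) ℂ) i j)).congr_of_eventuallyEq
        (Filter.Eventually.of_forall fun x => by simp [hφ0])
    simpa using (hder 0 w i j).unique h1
  have hDφ1 : ∀ w : ℂ, Dφ 1 w = 0 := by
    intro w; ext i j
    have h1 : HasDerivAt (fun w' : ℂ => φ 1 w' i j) 0 w :=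
      (hasDerivAt_const w ((1 : Matrix (Fin m) (Fin m) ℂ) i j)).congr_of_eventuallyEq
        (Filter.Eventually.of_forall fun x => by simp [hφ1])
    simpa using (hder 1 w i j).unique h1
  have hDrec : ∀ (w : ℂ) (n : ℕ), 1 ≤ n → n ≤ p →
      a n * Dφ (n + 1) w + b n * Dφ n w + (a (n - 1))ᴴ * Dφ (n - 1) w
        = φ n w + w • Dφ n w := by
    intro w n h1 h2
    ext i j
    have hL : HasDerivAt
        (fun w' : ℂ => (∑ k, a n i k * φ (n + 1) w' k j)
          + ((∑ k, b n i k * φ n w' k j) + (∑ k, (a (n - 1))ᴴ i k * φ (n - 1) w' k j)))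
        ((∑ k, a n i k * Dφ (n + 1) w k j)
          + ((∑ k, b n i k * Dφ n w k j) + (∑ k, (a (n - 1))ᴴ i k * Dφ (n - 1) w k j))) w := by
      refine HasDerivAt.add ?_ (HasDerivAt.add ?_ ?_) <;>
        exact HasDerivAt.fun_sum fun k _ => (hder _ w k j).const_mul _
    have hR : HasDerivAt (fun w' : ℂ => w' * φ n w' i j)
        (1 * φ n w i j + w * Dφ n w i j) w := (hasDerivAt_id w).mul (hder n w i j)
    have hfun : ∀ w' : ℂ,
        (fun w' : ℂ => w' * φ n w' i j) w'
          = (∑ k, a n i k * φ (n + 1) w' k j)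
            + ((∑ k, b n i k * φ n w' k j) + (∑ k, (a (n - 1))ᴴ i k * φ (n - 1) w' k j)) := by
      intro w'
      have := congrArg (fun M : Matrix (Fin m) (Fin m) ℂ => M i j) (hφ w' n h1 h2)
      simpa [Matrix.mul_apply, Matrix.add_apply, Matrix.smul_apply, add_assoc] using this.symm
    have hL' : HasDerivAt (fun w' : ℂ => w' * φ n w' i j)
        ((∑ k, a n i k * Dφ (n + 1) w k j)
          + ((∑ k, b n i k * Dφ n w k j) + (∑ k, (a (n - 1))ᴴ i k * Dφ (n - 1) w k j))) w :=
      hL.congr_of_eventuallyEq (Filter.Eventually.of_forall hfun)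
    have := hL'.unique hR
    simpa [Matrix.mul_apply, Matrix.add_apply, Matrix.smul_apply, add_assoc] using this
  -- real point conjugation
  have hzstar : star z = z := by simp [hz]
  -- the telescoping identity
  have tele : ∀ k, k ≤ p →
      ((∑ n ∈ Finset.Icc 1 k, (φ n z)ᴴ * φ n z
          = (φ k z)ᴴ * (a k * Dφ (k + 1) z) - (φ (k + 1) z)ᴴ * ((a k)ᴴ * Dφ k z))
        ∧ (φ k z)ᴴ * (a k * φ (k + 1) z) = (φ (k + 1) z)ᴴ * ((a k)ᴴ * φ k z)) := by
    intro k
    induction k with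
    | zero =>
      intro _
      constructor
      · simp [hφ0, hDφ0]
      · simp [hφ0]
    | succ k ih =>
      intro hk
      obtain ⟨ih1, ih2⟩ := ih (Nat.le_of_succ_le hk)
      have h1k : 1 ≤ k + 1 := Nat.le_add_left 1 k
      have hrec := hφ z (k + 1) h1k hk
      have hdrec := hDrec z (k + 1) h1k hk
      simp only [Nat.add_sub_cancel] at hrec hdrec
      have hbH : (b (k + 1))ᴴ = b (k + 1) := hb (k + 1) h1k hk
      -- conjugate transpose of the recurrence
      have hrecH : (φ (k + 1 + 1) z)ᴴ * (a (k + 1))ᴴ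
          = z • (φ (k + 1) z)ᴴ - (φ (k + 1) z)ᴴ * b (k + 1) - (φ k z)ᴴ * a k := by
        have := congrArg conjTranspose hrec
        simp only [conjTranspose_add, conjTranspose_mul, conjTranspose_conjTranspose,
          conjTranspose_smul, hzstar, hbH] at this
        linear_combination (norm := abel) this
      have hA : a (k + 1) * Dφ (k + 1 + 1) z
          = φ (k + 1) z + z • Dφ (k + 1) z - b (k + 1) * Dφ (k + 1) z
            - (a k)ᴴ * Dφ k z := by
        linear_combination (norm := abel) hdrec
      have hA' : a (k + 1) * φ (k + 1 + 1) z
          = z • φ (k + 1) z - b (k + 1) * φ (k + 1) z - (a k)ᴴ * φ k z := by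
        linear_combination (norm := abel) hrec
      constructor
      · rw [Finset.sum_Icc_succ_top h1k, ih1, hA, ← mul_assoc ((φ (k + 1 + 1) z)ᴴ), hrecH]
        simp only [mul_add, mul_sub, sub_mul, add_mul, smul_mul_assoc, mul_smul_comm,
          mul_assoc]
        abel
      · rw [hA', ← mul_assoc ((φ (k + 1 + 1) z)ᴴ), hrecH]
        simp only [mul_add, mul_sub, sub_mul, add_mul, smul_mul_assoc, mul_smul_comm,
          mul_assoc]
        rw [ih2]
  obtain ⟨hS, hV⟩ := tele p le_rfl
  rw [hap] at hS hV
  simp only [one_mul, conjTranspose_one] at hS hV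
  have sum_mulVec : ∀ (s : Finset ℕ) (F : ℕ → Matrix (Fin m) (Fin m) ℂ) (h : Fin m → ℂ),
      (∑ n ∈ s, F n) *ᵥ h = ∑ n ∈ s, F n *ᵥ h := by
    intro s F h
    ext i
    simp only [Matrix.mulVec, dotProduct, Matrix.sum_apply, Finset.sum_apply,
      Finset.sum_mul]
    exact Finset.sum_comm
  have dot_sum : ∀ (s : Finset ℕ) (v : ℕ → Fin m → ℂ) (x : Fin m → ℂ),
      x ⬝ᵥ (∑ n ∈ s, v n) = ∑ n ∈ s, x ⬝ᵥ v n := by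
    intro s v x
    simp only [dotProduct, Finset.sum_apply, Finset.mul_sum]
    rw [Finset.sum_comm]
  -- helper for hermitian pairing
  have pair : ∀ (A B : Matrix (Fin m) (Fin m) ℂ) (x y : Fin m → ℂ),
      star x ⬝ᵥ ((Aᴴ * B) *ᵥ y) = star (A *ᵥ x) ⬝ᵥ (B *ᵥ y) := by
    intro A B x y
    rw [star_mulVec, ← Matrix.dotProduct_mulVec, Matrix.mulVec_mulVec]
  -- Part 1 : injectivity
  have part1 : ∀ h : Fin m → ℂ, P *ᵥ h = h →
      (Ps * Dφ (p + 1) z * P) *ᵥ h = 0 → h = 0 := by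
    intro h hPh hYh
    have hker : φ (p + 1) z *ᵥ h = 0 := (hPker h).mpr hPh
    -- φ_p h lies in E♯
    have hEp : Ps *ᵥ (φ p z *ᵥ h) = φ p z *ᵥ h := by
      refine (hPsker _).mp ?_
      rw [Matrix.mulVec_mulVec, ← hV, ← Matrix.mulVec_mulVec, hker, Matrix.mulVec_zero]
    -- Ps Dφ h = 0
    have hP1 : Ps *ᵥ (Dφ (p + 1) z *ᵥ h) = 0 := by
      have : (Ps * Dφ (p + 1) z * P) *ᵥ h = Ps *ᵥ (Dφ (p + 1) z *ᵥ h) := by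
        rw [← Matrix.mulVec_mulVec, hPh, ← Matrix.mulVec_mulVec]
      rw [← this, hYh]
    -- pair against h in the sum identity
    have key : ∑ n ∈ Finset.Icc 1 p, star (φ n z *ᵥ h) ⬝ᵥ (φ n z *ᵥ h) = 0 := by
      have hc := congrArg (fun M : Matrix (Fin m) (Fin m) ℂ => star h ⬝ᵥ (M *ᵥ h)) hS
      have hl : star h ⬝ᵥ ((∑ n ∈ Finset.Icc 1 p, (φ n z)ᴴ * φ n z) *ᵥ h)
          = ∑ n ∈ Finset.Icc 1 p, star (φ n z *ᵥ h) ⬝ᵥ (φ n z *ᵥ h) := by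
        rw [sum_mulVec, dot_sum]
        exact Finset.sum_congr rfl fun n _ => pair _ _ _ _
      have hr : star h ⬝ᵥ (((φ p z)ᴴ * Dφ (p + 1) z - (φ (p + 1) z)ᴴ * Dφ p z) *ᵥ h) = 0 := by
        rw [Matrix.sub_mulVec, dotProduct_sub, pair, pair, hker]
        have t1 : star (φ p z *ᵥ h) ⬝ᵥ (Dφ (p + 1) z *ᵥ h) = 0 := by
          rw [← hEp, star_mulVec, hPsherm, ← Matrix.dotProduct_mulVec, hP1,
            dotProduct_zero]
        rw [t1]
        simp
      rw [hl, hr] at hc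
      exact hc
    -- turn into real statement
    have keyR : ∑ n ∈ Finset.Icc 1 p, (∑ i, Complex.normSq ((φ n z *ᵥ h) i)) = 0 := by
      have : ∀ n, star (φ n z *ᵥ h) ⬝ᵥ (φ n z *ᵥ h)
          = ((∑ i, Complex.normSq ((φ n z *ᵥ h) i) : ℝ) : ℂ) := by
        intro n
        simp only [dotProduct, Pi.star_apply]
        push_cast
        refine Finset.sum_congr rfl fun i _ => ?_
        rw [mul_comm]
        exact Complex.mul_conj _
      rw [Finset.sum_congr rfl fun n _ => this n] at key
      exact_mod_cast key
    have hterm : ∀ n ∈ Finset.Icc 1 p, (∑ i, Complex.normSq ((φ n z *ᵥ h) i)) = 0 := by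
      refine (Finset.sum_eq_zero_iff_of_nonneg fun n _ => ?_).mp keyR
      exact Finset.sum_nonneg fun i _ => Complex.normSq_nonneg _
    have h1 := hterm 1 (Finset.mem_Icc.mpr ⟨le_rfl, hp⟩)
    rw [hφ1, Matrix.one_mulVec] at h1
    funext i
    have := (Finset.sum_eq_zero_iff_of_nonneg
      fun i _ => Complex.normSq_nonneg (h i)).mp h1 i (Finset.mem_univ i)
    exact Complex.normSq_eq_zero.mp this
  refine ⟨part1, ?_⟩
  -- Part 2 : surjectivity
  set M : Matrix (Fin m) (Fin m) ℂ := φ (p + 1) z with hM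
  set E := LinearMap.ker M.mulVecLin with hE
  set Es := LinearMap.ker (Mᴴ).mulVecLin with hEs
  have hmemE : ∀ h : Fin m → ℂ, h ∈ E ↔ P *ᵥ h = h := by
    intro h
    rw [hE, LinearMap.mem_ker, Matrix.mulVecLin_apply]
    exact hPker h
  have hmemEs : ∀ h : Fin m → ℂ, h ∈ Es ↔ Ps *ᵥ h = h := by
    intro h
    rw [hEs, LinearMap.mem_ker, Matrix.mulVecLin_apply]
    exact hPsker h
  have hrank : Module.finrank ℂ E = Module.finrank ℂ Es := by
    have h1 := LinearMap.finrank_range_add_finrank_ker M.mulVecLin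
    have h2 := LinearMap.finrank_range_add_finrank_ker (Mᴴ).mulVecLin
    have h3 : (Mᴴ).rank = M.rank := rank_conjTranspose_complex M
    rw [Matrix.rank, Matrix.rank] at h3
    rw [← hE] at h1
    rw [← hEs] at h2
    omega
  -- the restricted map
  have hmap : ∀ x : Fin m → ℂ, (Ps * Dφ (p + 1) z * P).mulVecLin x ∈ Es := by
    intro x
    rw [hmemEs]
    rw [Matrix.mulVecLin_apply, show Ps * Dφ (p + 1) z * P = Ps * (Dφ (p + 1) z * P) from
      mul_assoc _ _ _, ← Matrix.mulVec_mulVec, ← Matrix.mulVec_mulVec, Matrix.mulVec_mulVec,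
      hPsidem]
  let f : E →ₗ[ℂ] Es := LinearMap.codRestrict Es
    (((Ps * Dφ (p + 1) z * P).mulVecLin).comp E.subtype) (fun x => hmap x)
  have hinj : Function.Injective f := by
    rw [injective_iff_map_eq_zero]
    intro x hx
    have hx' : (Ps * Dφ (p + 1) z * P) *ᵥ (x : Fin m → ℂ) = 0 := by
      have := congrArg (Subtype.val) hx
      simpa [f, Matrix.mulVecLin_apply, mul_assoc] using this
    have hxE : P *ᵥ (x : Fin m → ℂ) = (x : Fin m → ℂ) := (hmemE _).mp x.2
    exact Subtype.ext (part1 _ hxE hx')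
  have hsurj : Function.Surjective f :=
    (LinearMap.injective_iff_surjective_of_finrank_eq_finrank hrank).mp hinj
  intro y hPsy
  obtain ⟨x, hx⟩ := hsurj ⟨y, (hmemEs y).mpr hPsy⟩
  refine ⟨(x : Fin m → ℂ), (hmemE _).mp x.2, ?_⟩
  have := congrArg Subtype.val hx
  simpa [f, Matrix.mulVecLin_apply, mul_assoc] using this
end

section
/- Let A(t), B(t), C(t), D(t) be matrix families (blocks of an invertible block matrix M(t)) with, as t → 0, A(t) = X + O(t) where X is invertible, B(t) = O(t), C(t) = O(t), and D(t) = tY + O(t²) where Y is invertible. Then M(t) is invertible for small t ≠ 0 and the bottom-right block of M(t)⁻¹ equals t⁻¹ Y⁻¹ + O(1) as t → 0. -/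
open Matrix Asymptotics Filter

attribute [local instance] Matrix.linftyOpNormedAddCommGroup Matrix.linftyOpNormedSpace
  Matrix.linftyOpNormedRing Matrix.linftyOpNormedAlgebra

private theorem entry_le_linfty {m n : Type*} [Fintype m] [Fintype n]
    (A : Matrix m n ℂ) (i : m) (j : n) : ‖A i j‖ ≤ ‖A‖ := by
  have h1 : ‖A i j‖₊ ≤ ∑ j', ‖A i j'‖₊ :=
    Finset.single_le_sum (f := fun j' => ‖A i j'‖₊) (fun _ _ => zero_le) (Finset.mem_univ j)
  have h2 : (∑ j', ‖A i j'‖₊) ≤ Finset.univ.sup fun i => ∑ j', ‖A i j'‖₊ :=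
    Finset.le_sup (f := fun i => ∑ j', ‖A i j'‖₊) (Finset.mem_univ i)
  have := h1.trans h2
  rw [← Matrix.linfty_opNNNorm_def] at this
  exact this

private theorem entry_isBigO {m n : Type*} [Fintype m] [Fintype n] {f : ℂ → Matrix m n ℂ}
    {g : ℂ → ℂ} {l : Filter ℂ} (h : f =O[l] g) (i : m) (j : n) : (fun t => f t i j) =O[l] g :=
  (Asymptotics.isBigO_of_le l fun t => entry_le_linfty (f t) i j).trans h

private theorem isBigO_matrix_of_entry {m n : Type*} [Fintype m] [Fintype n] [DecidableEq m]
    [DecidableEq n] {f : ℂ → Matrix m n ℂ} {g : ℂ → ℂ} {l : Filter ℂ}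
    (h : ∀ i j, (fun t => f t i j) =O[l] g) : f =O[l] g := by
  have he : ∀ t, f t = ∑ i : m, ∑ j : n, f t i j • Matrix.single i j (1:ℂ) := by
    intro t
    conv_lhs => rw [Matrix.matrix_eq_sum_single (f t)]
    simp [Matrix.smul_single]
  rw [show f = fun t => ∑ i : m, ∑ j : n, f t i j • Matrix.single i j (1:ℂ) from
    funext he]
  refine Asymptotics.IsBigO.fun_sum fun i _ => Asymptotics.IsBigO.fun_sum fun j _ => ?_
  have h2 : (fun _ : ℂ => Matrix.single i j (1:ℂ)) =O[l] fun _ => (1:ℂ) :=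
    Asymptotics.isBigO_const_const _ one_ne_zero _
  simpa using (h i j).smul h2

private theorem isBigO_matmul {l' m n : Type*} [Fintype l'] [Fintype m] [Fintype n]
    {f : ℂ → Matrix l' m ℂ} {g : ℂ → Matrix m n ℂ} {p q : ℂ → ℂ} {L : Filter ℂ}
    (hf : f =O[L] p) (hg : g =O[L] q) :
    (fun t => f t * g t) =O[L] fun t => p t * q t := by
  obtain ⟨c1, hc1⟩ := hf.isBigOWith
  obtain ⟨c2, hc2⟩ := hg.isBigOWith
  rw [Asymptotics.isBigO_iff]
  refine ⟨c1 * c2, ?_⟩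
  filter_upwards [hc1.bound, hc2.bound] with t h1 h2
  calc ‖f t * g t‖ ≤ ‖f t‖ * ‖g t‖ := Matrix.linfty_opNorm_mul _ _
    _ ≤ (c1 * ‖p t‖) * (c2 * ‖q t‖) :=
        mul_le_mul h1 h2 (norm_nonneg _) (le_trans (norm_nonneg _) h1)
    _ = c1 * c2 * ‖p t * q t‖ := by rw [norm_mul]; ring

private theorem schur_point {m n : Type*} [Fintype m] [Fintype n] [DecidableEq m] [DecidableEq n]
    (A : Matrix m m ℂ) (B : Matrix m n ℂ) (C : Matrix n m ℂ) (D : Matrix n n ℂ)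
    (hA : IsUnit A) (hH : IsUnit (D - C * A⁻¹ * B)) :
    IsUnit (Matrix.fromBlocks A B C D) ∧
      (Matrix.fromBlocks A B C D)⁻¹.toBlocks₂₂ = (D - C * A⁻¹ * B)⁻¹ := by
  obtain ⟨iA⟩ := hA.nonempty_invertible
  have hA' : ⅟A = A⁻¹ := Matrix.invOf_eq_nonsing_inv A
  have hH' : IsUnit (D - C * ⅟A * B) := by rw [hA']; exact hH
  obtain ⟨iH⟩ := hH'.nonempty_invertible
  letI iM := Matrix.fromBlocks₁₁Invertible A B C D
  refine ⟨isUnit_of_invertible _, ?_⟩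
  have h := Matrix.invOf_fromBlocks₁₁_eq A B C D
  rw [Matrix.invOf_eq_nonsing_inv] at h
  rw [h]
  simp only [Matrix.toBlocks_fromBlocks₂₂]
  rw [Matrix.invOf_eq_nonsing_inv, hA']

/-- If `M(t) = [[A(t), B(t)], [C(t), D(t)]]` with `A(t) = X + O(t)` (`X` invertible),
`B(t), C(t) = O(t)`, and `D(t) = tY + O(t²)` (`Y` invertible), then `M(t)` is
invertible for small `t ≠ 0` and the bottom-right block of `M(t)⁻¹` equals
`t⁻¹ Y⁻¹ + O(1)` as `t → 0`. Big-O estimates are stated entrywise. -/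
theorem block_inverse_asymptotics (k' k : ℕ)
    (A : ℂ → Matrix (Fin k') (Fin k') ℂ) (B : ℂ → Matrix (Fin k') (Fin k) ℂ)
    (C : ℂ → Matrix (Fin k) (Fin k') ℂ) (D : ℂ → Matrix (Fin k) (Fin k) ℂ)
    (X : Matrix (Fin k') (Fin k') ℂ) (Y : Matrix (Fin k) (Fin k) ℂ)
    (hX : IsUnit X) (hY : IsUnit Y)
    (hA : ∀ i j, (fun t : ℂ => A t i j - X i j) =O[nhds 0] fun t => t)
    (hB : ∀ i j, (fun t : ℂ => B t i j) =O[nhds 0] fun t => t)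
    (hC : ∀ i j, (fun t : ℂ => C t i j) =O[nhds 0] fun t => t)
    (hD : ∀ i j, (fun t : ℂ => D t i j - t * Y i j) =O[nhds 0] fun t => t ^ 2) :
    (∀ᶠ t : ℂ in nhdsWithin 0 {0}ᶜ,
        IsUnit (Matrix.fromBlocks (A t) (B t) (C t) (D t))) ∧
    (∀ i j, (fun t : ℂ =>
        (Matrix.fromBlocks (A t) (B t) (C t) (D t))⁻¹.toBlocks₂₂ i j
          - t⁻¹ * Y⁻¹ i j) =O[nhdsWithin 0 {0}ᶜ] fun _ => (1 : ℂ)) := by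
  haveI : CompleteSpace (Matrix (Fin k') (Fin k') ℂ) :=
    FiniteDimensional.complete ℂ _
  haveI : CompleteSpace (Matrix (Fin k) (Fin k) ℂ) :=
    FiniteDimensional.complete ℂ _
  set L := nhdsWithin (0:ℂ) {0}ᶜ with hLdef
  have hLle : L ≤ nhds 0 := nhdsWithin_le_nhds
  have hne : ∀ᶠ t in L, t ≠ (0:ℂ) := by
    have : ∀ᶠ t in L, t ∈ ({0}ᶜ : Set ℂ) := eventually_mem_nhdsWithin
    exact this.mono fun t ht => ht
  -- matrix-level big-O hypotheses
  have hA' : (fun t => A t - X) =O[nhds 0] (fun t : ℂ => t) :=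
    isBigO_matrix_of_entry fun i j => by simpa using hA i j
  have hB' : (fun t => B t) =O[nhds 0] (fun t : ℂ => t) := isBigO_matrix_of_entry hB
  have hC' : (fun t => C t) =O[nhds 0] (fun t : ℂ => t) := isBigO_matrix_of_entry hC
  have hD' : (fun t => D t - t • Y) =O[nhds 0] (fun t : ℂ => t ^ 2) :=
    isBigO_matrix_of_entry fun i j => by
      simpa [Matrix.sub_apply, Matrix.smul_apply, smul_eq_mul] using hD i j
  have htzero : Tendsto (fun t : ℂ => t) (nhds 0) (nhds 0) := tendsto_id
  have htend : Tendsto (fun t => A t - X) (nhds 0) (nhds (0 : Matrix (Fin k') (Fin k') ℂ)) :=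
    hA'.trans_tendsto htzero
  have hAtends : Tendsto A (nhds 0) (nhds X) := by
    have := htend.add_const X
    simpa using this
  have hAunit : ∀ᶠ t in nhds 0, IsUnit (A t) :=
    hAtends.eventually (Units.isOpen.eventually_mem hX)
  -- inverse of A estimate
  have hAinv : (fun t => (A t)⁻¹ - X⁻¹) =O[nhds 0] (fun t : ℂ => t) := by
    have h1 := NormedRing.inverse_add_norm_diff_first_order hX.unit
    have h2 := h1.comp_tendsto htend
    have h3 := h2.trans hA'.norm_left
    refine h3.congr_left fun t => ?_
    simp only [Function.comp]
    rw [IsUnit.unit_spec, add_sub_cancel, ← Matrix.nonsing_inv_eq_ringInverse,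
      Matrix.coe_units_inv, IsUnit.unit_spec]
  have ht1 : (fun t : ℂ => t) =O[nhds 0] (fun _ : ℂ => (1:ℂ)) := htzero.isBigO_one ℂ
  have hAinvO1 : (fun t => (A t)⁻¹) =O[nhds 0] (fun _ : ℂ => (1:ℂ)) := by
    have h4 := (hAinv.trans ht1).add
      (Asymptotics.isBigO_const_const X⁻¹ (one_ne_zero (α := ℂ)) (nhds 0))
    refine (h4.congr_left fun t => by abel).congr_right fun t => by simp
  have hCAB : (fun t => C t * (A t)⁻¹ * B t) =O[nhds 0] (fun t : ℂ => t ^ 2) := by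
    have h := isBigO_matmul (isBigO_matmul hC' hAinvO1) hB'
    exact h.congr_right fun t => by ring
  set H : ℂ → Matrix (Fin k) (Fin k) ℂ := fun t => D t - C t * (A t)⁻¹ * B t with hHdef
  have hH : (fun t => H t - t • Y) =O[nhds 0] (fun t : ℂ => t ^ 2) := by
    have h := hD'.sub hCAB
    exact h.congr_left fun t => (sub_right_comm _ _ _)
  set F : ℂ → Matrix (Fin k) (Fin k) ℂ := fun t => t⁻¹ • H t with hFdef
  have hHF : ∀ t : ℂ, t ≠ 0 → H t = t • F t := by
    intro t ht
    rw [hFdef]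
    simp only
    rw [smul_smul, mul_inv_cancel₀ ht, one_smul]
  have hFY : (fun t => F t - Y) =O[L] (fun t : ℂ => t) := by
    have h1 : (fun t : ℂ => t⁻¹ • (H t - t • Y)) =O[L] fun t : ℂ => t⁻¹ • t ^ 2 :=
      (Asymptotics.isBigO_refl (fun t : ℂ => t⁻¹) L).smul (hH.mono hLle)
    refine h1.congr' ?_ ?_
    · filter_upwards [hne] with t ht
      rw [smul_sub, smul_smul, inv_mul_cancel₀ ht, one_smul]
    · filter_upwards [hne] with t ht
      rw [smul_eq_mul, sq, ← mul_assoc, inv_mul_cancel₀ ht, one_mul]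
  have hFtendsY : Tendsto F L (nhds Y) := by
    have h0 : Tendsto (fun t => F t - Y) L (nhds 0) :=
      hFY.trans_tendsto (htzero.mono_left hLle)
    have := h0.add_const Y
    simpa using this
  have hFunit : ∀ᶠ t in L, IsUnit (F t) :=
    hFtendsY.eventually (Units.isOpen.eventually_mem hY)
  have hFinv : (fun t => Ring.inverse (F t) - Y⁻¹) =O[L] (fun t : ℂ => t) := by
    have h1 := NormedRing.inverse_add_norm_diff_first_order hY.unit
    have h0 : Tendsto (fun t => F t - Y) L (nhds 0) :=
      hFY.trans_tendsto (htzero.mono_left hLle)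
    have h2 := h1.comp_tendsto h0
    have h3 := h2.trans hFY.norm_left
    refine h3.congr_left fun t => ?_
    simp only [Function.comp]
    rw [IsUnit.unit_spec, add_sub_cancel, Matrix.coe_units_inv, IsUnit.unit_spec]
  have hHunit : ∀ᶠ t in L, IsUnit (H t) := by
    filter_upwards [hne, hFunit] with t ht hu
    rw [hHF t ht, Matrix.isUnit_iff_isUnit_det, Matrix.det_smul]
    exact (isUnit_iff_ne_zero.2 (pow_ne_zero _ ht)).mul ((Matrix.isUnit_iff_isUnit_det _).1 hu)
  have hHinvF : ∀ᶠ t in L, (H t)⁻¹ = t⁻¹ • Ring.inverse (F t) := by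
    filter_upwards [hne, hFunit] with t ht hu
    rw [← Matrix.nonsing_inv_eq_ringInverse]
    apply Matrix.inv_eq_left_inv
    rw [hHF t ht, Matrix.smul_mul, Matrix.mul_smul, smul_smul, inv_mul_cancel₀ ht, one_smul,
      Matrix.nonsing_inv_mul _ ((Matrix.isUnit_iff_isUnit_det _).1 hu)]
  have hHinv : (fun t => (H t)⁻¹ - t⁻¹ • Y⁻¹) =O[L] (fun _ : ℂ => (1:ℂ)) := by
    have h1 : (fun t : ℂ => t⁻¹ • (Ring.inverse (F t) - Y⁻¹)) =O[L] fun t : ℂ => t⁻¹ • t :=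
      (Asymptotics.isBigO_refl (fun t : ℂ => t⁻¹) L).smul hFinv
    refine h1.congr' ?_ ?_
    · filter_upwards [hHinvF] with t h
      rw [smul_sub, h]
    · filter_upwards [hne] with t ht
      rw [smul_eq_mul, inv_mul_cancel₀ ht]
  have hAunitL : ∀ᶠ t in L, IsUnit (A t) := hAunit.filter_mono hLle
  constructor
  · filter_upwards [hAunitL, hHunit] with t h1 h2
    exact (schur_point _ _ _ _ h1 h2).1
  · intro i j
    have hmat : (fun t => (Matrix.fromBlocks (A t) (B t) (C t) (D t))⁻¹.toBlocks₂₂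
        - t⁻¹ • Y⁻¹) =O[L] (fun _ : ℂ => (1:ℂ)) := by
      refine hHinv.congr' ?_ EventuallyEq.rfl
      filter_upwards [hAunitL, hHunit] with t h1 h2
      rw [(schur_point _ _ _ _ h1 h2).2]
    have h := entry_isBigO hmat i j
    exact h.congr_left fun t => by
      simp [Matrix.sub_apply, Matrix.smul_apply, smul_eq_mul]
end

section
/- Let a be an invertible m×m matrix, μ₁, …, μ_K distinct reals, and Q_s orthogonal projections onto subspaces F_s ⊆ ℂ^m such that there is no nonzero ℂ^m-valued polynomial G of degree ≤ p−2 with Q_s G(μ_s) = 0 for all s. Let Q̃_s be the orthogonal projection onto (aᴴ F_s^⊥)^⊥. Then there is no nonzero ℂ^m-valued polynomial G of degree ≤ p−2 with Q̃_s G(μ_s) = 0 for all s; i.e., the tameness property is preserved under the transformation F_s ↦ (aᴴ F_s^⊥)^⊥. -/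
/-!
Write `G = aᴴ G'` coefficientwise. Evaluation at `μ s` commutes with `aᴴ`, and since
`ker Q̃ s = aᴴ (ker Q s)` with `aᴴ` injective, `Q̃ s G(μ s) = 0` forces `Q s G'(μ s) = 0`.
Tameness for `Q` gives `G' = 0`, hence `G = 0`.
-/

open Matrix

namespace Matrix

variable {n ι R : Type*} [Fintype n]

theorem mulVec_sum_smul [CommSemiring R] [Fintype ι] (b : Matrix n n R) (c : ι → R)
    (G : ι → n → R) :
    b *ᵥ ∑ t, c t • G t = ∑ t, c t • (b *ᵥ G t) := by
  simp only [mulVec_sum, mulVec_smul]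

theorem mulVec_eq_zero_of_ker_eq_mulVec_ker [Semiring R] [DecidableEq n] {b P Pt : Matrix n n R}
    (hb : IsUnit b)
    (hker : ∀ x, Pt *ᵥ x = 0 ↔ ∃ v, P *ᵥ v = 0 ∧ x = b *ᵥ v) {y : n → R}
    (hy : Pt *ᵥ (b *ᵥ y) = 0) : P *ᵥ y = 0 := by
  obtain ⟨v, hv, hyv⟩ := (hker _).mp hy
  rwa [mulVec_injective_of_isUnit hb hyv]

end Matrix

theorem tame_transform_general (m p K : ℕ) (a : Matrix (Fin m) (Fin m) ℂ)
    (ha : IsUnit a) (mu : Fin K → ℝ)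
    (Q Qt : Fin K → Matrix (Fin m) (Fin m) ℂ)
    (hQtker : ∀ s (x : Fin m → ℂ),
      Qt s *ᵥ x = 0 ↔ ∃ v : Fin m → ℂ, Q s *ᵥ v = 0 ∧ x = aᴴ *ᵥ v)
    (htame : ∀ G : Fin (p - 1) → Fin m → ℂ,
      (∀ s, Q s *ᵥ (∑ t : Fin (p - 1), ((mu s : ℂ) ^ (t : ℕ)) • G t) = 0) → G = 0) :
    ∀ G : Fin (p - 1) → Fin m → ℂ,
      (∀ s, Qt s *ᵥ (∑ t : Fin (p - 1), ((mu s : ℂ) ^ (t : ℕ)) • G t) = 0) → G = 0 := by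
  intro G hG
  have hb : IsUnit aᴴ := (isUnit_conjTranspose a).mpr ha
  choose G' hG' using fun t => mulVec_surjective_iff_isUnit.mpr hb (G t)
  have hG'_zero : G' = 0 := htame G' fun s => by
    refine mulVec_eq_zero_of_ker_eq_mulVec_ker hb (hQtker s) ?_
    simpa only [mulVec_sum_smul, hG'] using hG s
  funext t
  rw [← hG' t, hG'_zero, Pi.zero_apply, mulVec_zero]

/-- Tameness is preserved under the transformation `F s ↦ (aᴴ F sᗮ)ᗮ`: if there is
no nonzero `ℂ^m`-valued polynomial `G` of degree `≤ p − 2` with `Q s G(μ s) = 0`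
for all `s` (where `Q s` is the orthogonal projection onto `F s`, so
`Ker Q s = F sᗮ`), then the same holds with the orthogonal projections `Q̃ s` onto
`(aᴴ F sᗮ)ᗮ` (whose kernels are `aᴴ F sᗮ`). -/
theorem tame_transform (m p K : ℕ) (a : Matrix (Fin m) (Fin m) ℂ)
    (ha : IsUnit a) (mu : Fin K → ℝ) (hmu : Function.Injective mu)
    (Q Qt : Fin K → Matrix (Fin m) (Fin m) ℂ)
    (hQherm : ∀ s, (Q s)ᴴ = Q s) (hQidem : ∀ s, Q s * Q s = Q s)
    (hQtherm : ∀ s, (Qt s)ᴴ = Qt s) (hQtidem : ∀ s, Qt s * Qt s = Qt s)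
    (hQtker : ∀ s (x : Fin m → ℂ),
      Qt s *ᵥ x = 0 ↔ ∃ v : Fin m → ℂ, Q s *ᵥ v = 0 ∧ x = aᴴ *ᵥ v)
    (htame : ∀ G : Fin (p - 1) → Fin m → ℂ,
      (∀ s, Q s *ᵥ (∑ t : Fin (p - 1), ((mu s : ℂ) ^ (t : ℕ)) • G t) = 0) → G = 0) :
    ∀ G : Fin (p - 1) → Fin m → ℂ,
      (∀ s, Qt s *ᵥ (∑ t : Fin (p - 1), ((mu s : ℂ) ^ (t : ℕ)) • G t) = 0) → G = 0 :=
  tame_transform_general m p K a ha mu Q Qt hQtker htame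
end
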